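/- Let S₋₁ be the indecomposable elliptic ruled surface with invariant e = −1, A ≡ aX₀ + bf an ample divisor, and x a point not lying on T = ∪_{k≥2} T_k. If a/(2(b + a/2)) ≤ 1 then ε(A,x) = a; if a/(2(b + a/2)) > 1 then ε(A,x) = 2n(na + (n+1)b)/(2n² − 1) where n = ⌊1/(√(a/(2(b+a/2))) − 1)⌋ + 1. -/
import Mathlib


/-- Intersection number of numerical classes `a X₀ + b f` on a geometrically ruled
surface with invariant `e`:  `(a,b)·(a',b') = ab' + a'b - e a a'`. -/
def inter (e : ℤ) (c d : ℤ × ℤ) : ℤ := c.1 * d.2 + c.2 * d.1 - e * c.1 * d.1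

/-- Abstract geometrically ruled surface `S = P(E) → X` over a smooth curve, with
`Num(S) = ℤX₀ ⊕ ℤf`, recorded through the numerical class of each irreducible curve,
multiplicities of curves at points, and the standard intersection-theoretic facts. -/
structure RuledSurface where
  /-- the invariant `e` of the ruled surface -/
  e : ℤ
  /-- points of the surface -/
  Point : Type
  /-- reduced irreducible curves on the surface -/
  Curve : Type
  /-- numerical class `(a, b)` of a curve, meaning `a X₀ + b f` -/
  num : Curve → ℤ × ℤ
  /-- the curve passes through the point -/
  mem : Point → Curve → Prop
  /-- multiplicity of a curve at a point -/
  mult : Point → Curve → ℕ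
  mult_pos : ∀ x C, mem x C → 1 ≤ mult x C
  /-- two distinct irreducible curves through `x` satisfy `C·D ≥ mult_x C · mult_x D` -/
  inter_ge_mult : ∀ x (C D : Curve), C ≠ D → mem x C → mem x D →
    (mult x C : ℤ) * (mult x D : ℤ) ≤ inter e (num C) (num D)
  /-- the fibre through a point -/
  fibre : Point → Curve
  fibre_num : ∀ x, num (fibre x) = (0, 1)
  fibre_mem : ∀ x, mem x (fibre x)
  fibre_mult : ∀ x, mult x (fibre x) = 1

/-- `C` is a Seshadri exceptional curve based at `x`: an irreducible curve through `x`
with `C² < mult_x(C)²`. -/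
def RuledSurface.exc (S : RuledSurface) (x : S.Point) (C : S.Curve) : Prop :=
  S.mem x C ∧ inter S.e (S.num C) (S.num C) < (S.mult x C : ℤ) ^ 2

/-- The Seshadri constant of a divisor class `A` at `x`: the infimum of `A·C / mult_x C`
over irreducible curves `C` through `x`. -/
noncomputable def RuledSurface.seshadri (S : RuledSurface) (A : ℤ × ℤ) (x : S.Point) : ℝ :=
  sInf {r : ℝ | ∃ C : S.Curve, S.mem x C ∧ r = (inter S.e A (S.num C) : ℝ) / (S.mult x C : ℝ)}

/-- The ratio `a/(2(b + a/2))` for an ample class `A = (a, b)` on `S₋₁`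
(here `e = -1`, so `b + a/2 = b - ae/2`). -/
noncomputable def sRatio (A : ℤ × ℤ) : ℝ :=
  (A.1 : ℝ) / (2 * ((A.2 : ℝ) + (A.1 : ℝ) / 2))

/-- The index `n = ⌊1/(√(a/(2(b + a/2))) - 1)⌋ + 1`. -/
noncomputable def nIdx' (A : ℤ × ℤ) : ℕ := ⌊1 / (Real.sqrt (sRatio A) - 1)⌋₊ + 1

/-- `q_{C'ₙ}(A) = 2n(na + (n+1)b)/(2n² - 1)` for `A = (a, b)`. -/
noncomputable def qC' (n : ℕ) (A : ℤ × ℤ) : ℝ :=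
  2 * (n : ℝ) * ((n : ℝ) * (A.1 : ℝ) + ((n : ℝ) + 1) * (A.2 : ℝ)) /
    (2 * (n : ℝ) ^ 2 - 1)

lemma sqrtBound (a b d1 d2 m : ℝ) (ha : 0 < a) (ht : 0 < 2*b+a)
    (hm : 1 ≤ m) (hd : m ≤ d1) (hself : m^2 ≤ 2*(d1*d2) + d1^2) :
    Real.sqrt (a*(2*b+a)) * m ≤ a*d2 + b*d1 + a*d1 := by
  have hsa2 : Real.sqrt a ^ 2 = a := Real.sq_sqrt ha.le
  have hst2 : Real.sqrt (2*b+a) ^ 2 = 2*b+a := Real.sq_sqrt ht.le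
  have hprod : Real.sqrt a * Real.sqrt (2*b+a) = Real.sqrt (a*(2*b+a)) :=
    (Real.sqrt_mul ha.le _).symm
  have hsq := sq_nonneg (Real.sqrt (2*b+a) * d1 - Real.sqrt a * m)
  have hkey : 0 ≤ (2*b+a)*d1^2 - 2*(Real.sqrt (a*(2*b+a))*(d1*m)) + a*m^2 := by
    have hexp : (Real.sqrt (2*b+a) * d1 - Real.sqrt a * m)^2
        = (2*b+a)*d1^2 - 2*(Real.sqrt (a*(2*b+a))*(d1*m)) + a*m^2 := by
      linear_combination d1^2 * hst2 + m^2 * hsa2 - 2*d1*m*hprod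
    linarith [hsq, hexp.symm.le, hexp.le]
  nlinarith [hkey, hself, hd, hm, ha, ht, Real.sqrt_nonneg (a*(2*b+a)),
    mul_pos ha ht]

set_option maxHeartbeats 1000000

/-- Let `S₋₁` be the indecomposable elliptic ruled surface with invariant `e = -1`,
`T = ∪_{k≥2} T_k` the countable union of torsion loci, and `x ∉ T`: the Seshadri
exceptional curves based at `x` are exactly the fibre and the strict transforms
`C'ₙ ≡ 2n(n+1)X₀ - 2nf` with `mult_x(C'ₙ) = 2n² - 1` (`n ≥ 1`). For an ample
divisor `A ≡ aX₀ + bf` (`a > 0`, `b > -a/2`):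
if `a/(2(b + a/2)) ≤ 1` then `ε(A,x) = a`; if `a/(2(b + a/2)) > 1` then
`ε(A,x) = 2n(na + (n+1)b)/(2n² - 1)` with `n = ⌊1/(√(a/(2(b+a/2))) - 1)⌋ + 1`. -/
theorem stmt19 (S : RuledSurface) (he : S.e = -1)
    (T : Set S.Point) (x : S.Point) (hx : x ∉ T)
    (Cn' : ℕ → S.Curve)
    (hCnum : ∀ n : ℕ, 1 ≤ n →
      S.num (Cn' n) = (2 * (n : ℤ) * ((n : ℤ) + 1), -(2 * (n : ℤ))))
    (hCmem : ∀ n : ℕ, 1 ≤ n → S.mem x (Cn' n))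
    (hCmult : ∀ n : ℕ, 1 ≤ n → (S.mult x (Cn' n) : ℤ) = 2 * (n : ℤ) ^ 2 - 1)
    (hexc : ∀ D : S.Curve, S.exc x D ↔ (D = S.fibre x ∨ ∃ n : ℕ, 1 ≤ n ∧ D = Cn' n))
    (A : ℤ × ℤ) (hA : 0 < A.1 ∧ -A.1 < 2 * A.2) :
    (sRatio A ≤ 1 → S.seshadri A x = (A.1 : ℝ)) ∧
    (1 < sRatio A → S.seshadri A x = qC' (nIdx' A) A) := by
  obtain ⟨hA1, hA2⟩ := hA
  have ha : (0:ℝ) < (A.1:ℝ) := by exact_mod_cast hA1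
  have ht : (0:ℝ) < 2*(A.2:ℝ)+(A.1:ℝ) := by
    have : (-A.1 : ℝ) < 2*(A.2:ℝ) := by exact_mod_cast hA2
    linarith
  have hr : sRatio A = (A.1:ℝ) / (2*(A.2:ℝ)+(A.1:ℝ)) := by
    rw [sRatio, show 2*((A.2:ℝ) + (A.1:ℝ)/2) = 2*(A.2:ℝ)+(A.1:ℝ) by ring]
  -- the set of Seshadri quotients
  set VS := {r : ℝ | ∃ C : S.Curve, S.mem x C ∧
      r = (inter S.e A (S.num C) : ℝ) / (S.mult x C : ℝ)} with hVS
  have hses : S.seshadri A x = sInf VS := rfl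
  -- value of the fibre
  have hval_f : (inter S.e A (S.num (S.fibre x)) : ℝ) / (S.mult x (S.fibre x) : ℝ)
      = (A.1:ℝ) := by
    rw [S.fibre_num, S.fibre_mult]
    simp [inter]
  have hmem_f : ((A.1:ℝ)) ∈ VS := ⟨S.fibre x, S.fibre_mem x, hval_f.symm⟩
  have hne : VS.Nonempty := ⟨_, hmem_f⟩
  -- denominator positivity
  have hden : ∀ k : ℕ, 1 ≤ k → (0:ℝ) < 2*(k:ℝ)^2 - 1 := by
    intro k hk
    have : (1:ℝ) ≤ (k:ℝ) := by exact_mod_cast hk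
    nlinarith
  -- value of Cn' k
  have hval_C : ∀ k : ℕ, 1 ≤ k →
      (inter S.e A (S.num (Cn' k)) : ℝ) / (S.mult x (Cn' k) : ℝ) = qC' k A := by
    intro k hk
    have h1 : inter S.e A (S.num (Cn' k))
        = 2*(k:ℤ)*((k:ℤ)*A.1 + ((k:ℤ)+1)*A.2) := by
      rw [hCnum k hk, he, inter]; ring
    have h2 : ((S.mult x (Cn' k)) : ℝ) = 2*(k:ℝ)^2 - 1 := by
      have := hCmult k hk
      have : ((S.mult x (Cn' k) : ℤ) : ℝ) = ((2*(k:ℤ)^2 - 1 : ℤ) : ℝ) := by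
        exact_mod_cast congrArg (Int.cast : ℤ → ℝ) this
      push_cast at this
      exact_mod_cast this
    rw [h1, h2, qC']
    push_cast
    ring
  -- lower bound for non-exceptional curves
  have hlow : ∀ C : S.Curve, S.mem x C → ¬ S.exc x C →
      Real.sqrt ((A.1:ℝ)*(2*(A.2:ℝ)+(A.1:ℝ)))
        ≤ (inter S.e A (S.num C) : ℝ) / (S.mult x C : ℝ) := by
    intro C hmC hnexc
    have hCe : ¬ (C = S.fibre x ∨ ∃ n : ℕ, 1 ≤ n ∧ C = Cn' n) :=
      fun h => hnexc ((hexc C).2 h)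
    push_neg at hCe
    obtain ⟨hCf, _⟩ := hCe
    have hm1 : 1 ≤ S.mult x C := S.mult_pos x C hmC
    have hmR : (1:ℝ) ≤ (S.mult x C : ℝ) := by exact_mod_cast hm1
    have hmpos : (0:ℝ) < (S.mult x C : ℝ) := by linarith
    -- m ≤ d1
    have hd1 : (S.mult x C : ℤ) ≤ (S.num C).1 := by
      have h := S.inter_ge_mult x C (S.fibre x) hCf hmC (S.fibre_mem x)
      rw [S.fibre_num, S.fibre_mult] at h
      simpa [inter] using h
    have hd1R : ((S.mult x C : ℕ):ℝ) ≤ ((S.num C).1 : ℝ) := by exact_mod_cast hd1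
    -- self-intersection
    have hself : ((S.mult x C : ℤ))^2 ≤ inter S.e (S.num C) (S.num C) := by
      by_contra h
      push_neg at h
      exact hnexc ⟨hmC, h⟩
    have hselfR : ((S.mult x C : ℕ):ℝ)^2
        ≤ 2*(((S.num C).1:ℝ)*((S.num C).2:ℝ)) + ((S.num C).1:ℝ)^2 := by
      have : inter S.e (S.num C) (S.num C)
          = 2*((S.num C).1*(S.num C).2) + (S.num C).1^2 := by
        rw [inter, he]; ring
      rw [this] at hself
      exact_mod_cast hself
    have hinter : (inter S.e A (S.num C) : ℝ)
        = (A.1:ℝ)*((S.num C).2:ℝ) + (A.2:ℝ)*((S.num C).1:ℝ)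
          + (A.1:ℝ)*((S.num C).1:ℝ) := by
      rw [inter, he]; push_cast; ring
    rw [hinter, le_div_iff₀ hmpos]
    have := sqrtBound (A.1:ℝ) (A.2:ℝ) ((S.num C).1:ℝ) ((S.num C).2:ℝ)
      ((S.mult x C : ℕ):ℝ) ha ht hmR hd1R hselfR
    linarith
  constructor
  · -- case sRatio A ≤ 1
    intro h1
    have hb : (0:ℝ) ≤ (A.2:ℝ) := by
      rw [hr, div_le_one ht] at h1
      linarith
    have ha_le_g : (A.1:ℝ) ≤ Real.sqrt ((A.1:ℝ)*(2*(A.2:ℝ)+(A.1:ℝ))) := by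
      rw [Real.le_sqrt ha.le (by positivity)]
      nlinarith
    have hlb : ∀ r ∈ VS, (A.1:ℝ) ≤ r := by
      rintro r ⟨C, hmC, rfl⟩
      by_cases hE : S.exc x C
      · rcases (hexc C).1 hE with hCeq | ⟨k, hk, hCeq⟩
        · rw [hCeq, hval_f]
        · rw [hCeq, hval_C k hk, qC', le_div_iff₀ (hden k hk)]
          have hkR : (1:ℝ) ≤ (k:ℝ) := by exact_mod_cast hk
          nlinarith [mul_nonneg (mul_nonneg (by linarith : (0:ℝ) ≤ (k:ℝ))
            (by linarith : (0:ℝ) ≤ (k:ℝ)+1)) hb]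
      · exact le_trans ha_le_g (hlow C hmC hE)
    rw [hses]
    exact le_antisymm (csInf_le ⟨_, hlb⟩ hmem_f) (le_csInf hne hlb)
  · -- case 1 < sRatio A
    intro h2
    set s := Real.sqrt (sRatio A) with hs_def
    have hr0 : (0:ℝ) ≤ sRatio A := le_of_lt (lt_trans one_pos h2)
    have hs1 : 1 < s := by
      rw [hs_def]
      rw [show (1:ℝ) < Real.sqrt (sRatio A) ↔ (1:ℝ)^2 < sRatio A from
        Real.lt_sqrt zero_le_one]
      simpa using h2
    have hs0 : (0:ℝ) < s := by linarith
    have hsa : s^2*(2*(A.2:ℝ)+(A.1:ℝ)) = (A.1:ℝ) := by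
      rw [hs_def, Real.sq_sqrt hr0, hr]
      field_simp
    set n := nIdx' A with hn_def
    have hn1 : 1 ≤ n := Nat.le_add_left 1 _
    have hnfl : (n:ℝ) = (⌊1/(s-1)⌋₊ : ℝ) + 1 := by
      rw [hn_def, nIdx', hs_def]; push_cast; ring
    have hu0 : (0:ℝ) ≤ 1/(s-1) := div_nonneg zero_le_one (by linarith)
    have hfl : ((n:ℝ) - 1) ≤ 1/(s-1) := by
      have := Nat.floor_le hu0
      rw [hnfl]; linarith
    have hfu : 1/(s-1) < (n:ℝ) := by
      have := Nat.lt_floor_add_one (1/(s-1))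
      rw [hnfl]; linarith
    have hs_lo : (n:ℝ) + 1 < (n:ℝ)*s := by
      have h := (div_lt_iff₀ (by linarith : (0:ℝ) < s-1)).1 hfu
      nlinarith
    have hs_hi : ((n:ℝ)-1)*s ≤ (n:ℝ) := by
      have h := (le_div_iff₀ (by linarith : (0:ℝ) < s-1)).1 hfl
      nlinarith
    -- sqrt(A²) = s * t
    have hg : Real.sqrt ((A.1:ℝ)*(2*(A.2:ℝ)+(A.1:ℝ))) = s*(2*(A.2:ℝ)+(A.1:ℝ)) := by
      rw [show (A.1:ℝ)*(2*(A.2:ℝ)+(A.1:ℝ)) = (s*(2*(A.2:ℝ)+(A.1:ℝ)))^2 by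
        linear_combination (2*(A.2:ℝ)+(A.1:ℝ)) * hsa.symm]
      exact Real.sqrt_sq (by positivity)
    -- the key identity
    have hdiff : ∀ k : ℕ, 2*(k:ℝ)*((k:ℝ)*(A.1:ℝ) + ((k:ℝ)+1)*(A.2:ℝ))
        - s*(2*(A.2:ℝ)+(A.1:ℝ))*(2*(k:ℝ)^2-1)
        = (2*(A.2:ℝ)+(A.1:ℝ))*(((k:ℝ)*s - ((k:ℝ)+1))*(((k:ℝ)-1)*s - (k:ℝ))) := by
      intro k
      linear_combination (-((k:ℝ)*((k:ℝ)-1))) * hsa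
    -- q_n ≤ s t
    have hq_le_g : qC' n A ≤ s*(2*(A.2:ℝ)+(A.1:ℝ)) := by
      have hP : ((n:ℝ)*s - ((n:ℝ)+1))*(((n:ℝ)-1)*s - (n:ℝ)) ≤ 0 :=
        mul_nonpos_of_nonneg_of_nonpos (by linarith) (by linarith)
      have hPt : (2*(A.2:ℝ)+(A.1:ℝ))*(((n:ℝ)*s - ((n:ℝ)+1))*(((n:ℝ)-1)*s - (n:ℝ))) ≤ 0 :=
        mul_nonpos_of_nonneg_of_nonpos ht.le hP
      rw [qC', div_le_iff₀ (hden n hn1)]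
      linarith [hdiff n]
    -- q_k ≥ s t for k ≥ 1
    have hq_ge_g : ∀ k : ℕ, 1 ≤ k → k ≠ n → s*(2*(A.2:ℝ)+(A.1:ℝ)) ≤ qC' k A := by
      intro k hk hkn
      have hkR : (1:ℝ) ≤ (k:ℝ) := by exact_mod_cast hk
      have hP : 0 ≤ ((k:ℝ)*s - ((k:ℝ)+1))*(((k:ℝ)-1)*s - (k:ℝ)) := by
        rcases lt_or_gt_of_ne hkn with hlt | hgt
        · -- k < n : both factors ≤ 0
          have hkn' : (k:ℝ) ≤ (n:ℝ) - 1 := by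
            have : (k:ℝ) + 1 ≤ (n:ℝ) := by exact_mod_cast hlt
            linarith
          have hf1 : (k:ℝ)*s - ((k:ℝ)+1) ≤ 0 := by
            nlinarith [mul_nonneg (by linarith : (0:ℝ) ≤ (n:ℝ)-1-(k:ℝ))
              (by linarith : (0:ℝ) ≤ s - 1)]
          have hf2 : ((k:ℝ)-1)*s - (k:ℝ) ≤ 0 := by
            nlinarith [mul_nonneg (by linarith : (0:ℝ) ≤ (n:ℝ)-(k:ℝ))
              (by linarith : (0:ℝ) ≤ s - 1)]
          nlinarith [mul_nonneg (neg_nonneg.2 hf1) (neg_nonneg.2 hf2)]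
        · -- k > n : both factors ≥ 0
          have hkn' : (n:ℝ) + 1 ≤ (k:ℝ) := by exact_mod_cast hgt
          have hf1 : 0 ≤ (k:ℝ)*s - ((k:ℝ)+1) := by
            nlinarith [mul_nonneg (by linarith : (0:ℝ) ≤ (k:ℝ)-(n:ℝ))
              (by linarith : (0:ℝ) ≤ s - 1)]
          have hf2 : 0 ≤ ((k:ℝ)-1)*s - (k:ℝ) := by
            nlinarith [mul_nonneg (by linarith : (0:ℝ) ≤ (k:ℝ)-1-(n:ℝ))
              (by linarith : (0:ℝ) ≤ s - 1)]
          exact mul_nonneg hf1 hf2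
      have hPt : 0 ≤ (2*(A.2:ℝ)+(A.1:ℝ))*(((k:ℝ)*s - ((k:ℝ)+1))*(((k:ℝ)-1)*s - (k:ℝ))) :=
        mul_nonneg ht.le hP
      rw [qC', le_div_iff₀ (hden k hk)]
      linarith [hdiff k]
    -- s t ≤ a
    have hg_le_a : s*(2*(A.2:ℝ)+(A.1:ℝ)) ≤ (A.1:ℝ) := by
      nlinarith [hsa, mul_pos hs0 ht]
    -- lower bound
    have hlb : ∀ r ∈ VS, qC' n A ≤ r := by
      rintro r ⟨C, hmC, rfl⟩
      by_cases hE : S.exc x C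
      · rcases (hexc C).1 hE with hCeq | ⟨k, hk, hCeq⟩
        · rw [hCeq, hval_f]
          linarith
        · rw [hCeq, hval_C k hk]
          by_cases hkn : k = n
          · rw [hkn]
          · exact le_trans hq_le_g (hq_ge_g k hk hkn)
      · have h := hlow C hmC hE
        rw [hg] at h
        linarith
    have hmem_n : qC' n A ∈ VS := ⟨Cn' n, hCmem n hn1, (hval_C n hn1).symm⟩
    rw [hses]
    exact le_antisymm (csInf_le ⟨_, hlb⟩ hmem_n) (le_csInf hne hlb)
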